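/- arXiv:2412.11678 — 3 statements merged into one kernel-verified Lean document; each statement's English description precedes it below -/
import Mathlib

section
/- Let C be a cycle of length L >= N+1 in a graph G, and suppose N agents occupy distinct vertices of C. Then there exists a new injective assignment of agents to vertices of C such that each agent is either at its original vertex or at the successor of its original vertex along C, and at least one agent whose successor vertex was unoccupied has moved to that successor. -/
/-! Since `N < L`, the occupied positions form a nonempty proper subset of the cyclic group
`Fin L`. Such a subset is not closed under `· + 1`, so some occupied vertex has a free
successor; moving just the agent on it one step forward gives the new assignment. -/

open Function Finset

theorem Function.Injective.update_of_forall_ne {α β : Type*} [DecidableEq α] {f : α → β}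
    (hf : Injective f) (a : α) {b : β} (hb : ∀ x, f x ≠ b) : Injective (update f a b) := by
  intro x y hxy
  by_cases hx : x = a <;> by_cases hy : y = a
  · rw [hx, hy]
  · subst hx; rw [update_self, update_of_ne hy] at hxy; exact absurd hxy.symm (hb y)
  · subst hy; rw [update_self, update_of_ne hx] at hxy; exact absurd hxy (hb x)
  · rw [update_of_ne hx, update_of_ne hy] at hxy; exact hf hxy

open Fin.NatCast in
theorem Fin.exists_mem_add_one_notMem {L : ℕ} [NeZero L] {s : Finset (Fin L)}
    (hs : s.Nonempty) (hne : s ≠ univ) : ∃ k ∈ s, k + 1 ∉ s := by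
  by_contra! hclosed
  obtain ⟨a, ha⟩ := hs
  have hiter : ∀ n : ℕ, a + n ∈ s := by
    intro n
    induction n with
    | zero => simpa using ha
    | succ n ih => simpa [add_assoc] using hclosed _ ih
  refine hne (eq_univ_of_forall fun m => ?_)
  simpa using hiter (m - a).val

theorem cycle_advance_exists_general
    {V : Type*} (N L : ℕ) [NeZero L]
    (hN : 1 ≤ N) (hL : N + 1 ≤ L)
    (c : Fin L → V) (hc : Function.Injective c)
    (f : Fin N → V) (hf : Function.Injective f)
    (hocc : ∀ i : Fin N, ∃ k : Fin L, f i = c k) :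
    ∃ g : Fin N → V, Function.Injective g ∧
      (∀ i : Fin N, ∃ k : Fin L, f i = c k ∧ (g i = c k ∨ g i = c (k + 1))) ∧
      (∃ i : Fin N, ∃ k : Fin L, f i = c k ∧ (∀ j : Fin N, f j ≠ c (k + 1)) ∧
        g i = c (k + 1)) := by
  choose pos hpos using hocc
  have hne : univ.image pos ≠ univ := fun h => by
    have := h ▸ card_image_le (s := univ) (f := pos)
    simp only [card_univ, Fintype.card_fin] at this
    omega
  obtain ⟨k, hk, hk1⟩ :=
    Fin.exists_mem_add_one_notMem ((univ_nonempty_iff.2 ⟨⟨0, hN⟩⟩).image pos) hne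
  obtain ⟨i, -, rfl⟩ := mem_image.1 hk
  have hfree : ∀ j, f j ≠ c (pos i + 1) := fun j hj =>
    hk1 (mem_image.2 ⟨j, mem_univ j, hc (by rw [← hpos, hj])⟩)
  refine ⟨update f i (c (pos i + 1)), hf.update_of_forall_ne i hfree, fun j => ?_,
    ⟨i, pos i, hpos i, hfree, update_self ..⟩⟩
  refine ⟨pos j, hpos j, ?_⟩
  rcases eq_or_ne j i with rfl | hji
  · exact Or.inr (update_self ..)
  · exact Or.inl (by rw [update_of_ne hji, hpos])

/-- Let C be a cycle of length L ≥ N+1 in a graph G, and suppose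
N agents occupy distinct vertices of C. Then there exists a new injective
assignment of agents to vertices of C such that each agent is either at its
original vertex or at the successor of its original vertex along C, and at
least one agent whose successor vertex was unoccupied has moved to that
successor. -/
theorem cycle_advance_exists
    {V : Type*} (G : SimpleGraph V) (N L : ℕ) [NeZero L]
    (hN : 1 ≤ N) (hL : N + 1 ≤ L)
    (c : Fin L → V) (hc : Function.Injective c)
    (hadj : ∀ k : Fin L, G.Adj (c k) (c (k + 1)))
    (f : Fin N → V) (hf : Function.Injective f)
    (hocc : ∀ i : Fin N, ∃ k : Fin L, f i = c k) :
    ∃ g : Fin N → V, Function.Injective g ∧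
      (∀ i : Fin N, ∃ k : Fin L, f i = c k ∧ (g i = c k ∨ g i = c (k + 1))) ∧
      (∃ i : Fin N, ∃ k : Fin L, f i = c k ∧ (∀ j : Fin N, f j ≠ c (k + 1)) ∧
        g i = c (k + 1)) :=
  cycle_advance_exists_general N L hN hL c hc f hf hocc
end

section
/- Consider N agents with pairwise distinct initial priorities in [0,1), evolving so that at each round the priority of an agent is reset to its initial value if and only if that agent currently has the strictly highest priority, and otherwise is incremented by 1. Then within at most N·(N) rounds after any starting round, every agent has held the strictly highest priority at least once. -/
/-- N agents with pairwise distinct initial priorities in [0,1);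
each round, the agent with strictly highest priority resets to its initial
value, and every other agent's priority is incremented by 1. Then within at
most N·N rounds after any starting round, every agent has held the strictly
highest priority at least once. -/
theorem every_agent_attains_highest_priority
    (N : ℕ) (p : ℕ → Fin N → ℝ)
    (h0 : ∀ i : Fin N, p 0 i ∈ Set.Ico (0 : ℝ) 1)
    (hinj : Function.Injective (p 0))
    (hreset : ∀ (t : ℕ) (i : Fin N),
      (∀ j : Fin N, j ≠ i → p t i > p t j) → p (t + 1) i = p 0 i)
    (hinc : ∀ (t : ℕ) (i : Fin N),
      ¬ (∀ j : Fin N, j ≠ i → p t i > p t j) → p (t + 1) i = p t i + 1) :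
    ∀ (t₀ : ℕ) (i : Fin N), ∃ t : ℕ, t₀ ≤ t ∧ t ≤ t₀ + N * N ∧
      ∀ j : Fin N, j ≠ i → p t i > p t j := by
  intro t₀ i
  by_contra hcon
  push_neg at hcon
  have hnotmax : ∀ t, t₀ ≤ t → t ≤ t₀ + N * N →
      ¬ ∀ j : Fin N, j ≠ i → p t i > p t j := by
    intro t h1 h2 hmax
    obtain ⟨j, hj, hle⟩ := hcon t h1 h2
    exact (not_lt.mpr hle) (hmax j hj)
  -- priorities stay nonnegative
  have hnn : ∀ t j, 0 ≤ p t j := by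
    intro t
    induction t with
    | zero => intro j; exact (h0 j).1
    | succ t ih =>
      intro j
      by_cases hm : ∀ k : Fin N, k ≠ j → p t j > p t k
      · rw [hreset t j hm]; exact (h0 j).1
      · rw [hinc t j hm]; linarith [ih j]
  -- p t j = p 0 j + (a natural number)
  have hnat : ∀ t j, ∃ n : ℕ, p t j = p 0 j + n := by
    intro t
    induction t with
    | zero => intro j; exact ⟨0, by simp⟩
    | succ t ih =>
      intro j
      by_cases hm : ∀ k : Fin N, k ≠ j → p t j > p t k
      · exact ⟨0, by rw [hreset t j hm]; simp⟩
      · obtain ⟨n, hn⟩ := ih j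
        exact ⟨n + 1, by rw [hinc t j hm, hn]; push_cast; ring⟩
  -- priorities are always pairwise distinct
  have hdist : ∀ t, Function.Injective (p t) := by
    intro t a b hab
    obtain ⟨na, ha⟩ := hnat t a
    obtain ⟨nb, hb⟩ := hnat t b
    have h1 := h0 a
    have h2 := h0 b
    simp only [Set.mem_Ico] at h1 h2
    rw [ha, hb] at hab
    have hcast : ((na - nb : ℤ) : ℝ) = p 0 b - p 0 a := by push_cast; linarith
    have habs : |((na - nb : ℤ) : ℝ)| < 1 := by
      rw [hcast, abs_lt]; constructor <;> linarith
    have habs' : |(na - nb : ℤ)| < 1 := by exact_mod_cast habs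
    obtain ⟨hl, hr⟩ := abs_lt.mp habs'
    have hnanb : (na : ℝ) = nb := by exact_mod_cast (by omega : (na : ℤ) = nb)
    apply hinj
    linarith
  -- at every round there is a strict max agent
  have hex : ∀ t, ∃ m : Fin N, ∀ j : Fin N, j ≠ m → p t m > p t j := by
    intro t
    have : Nonempty (Fin N) := ⟨i⟩
    obtain ⟨m, hm⟩ := Finite.exists_max (p t)
    exact ⟨m, fun j hj => lt_of_le_of_ne (hm j) (fun h => hj (hdist t h))⟩
  have hN : 0 < N := i.pos
  have hNN : N ≤ N * N := Nat.le_mul_of_pos_left N hN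
  -- invariant: once j is max (while i is never max in the window), j stays below i
  have hinv : ∀ (a d : ℕ) (j : Fin N), t₀ ≤ a → a + d ≤ t₀ + N * N →
      (∀ k : Fin N, k ≠ j → p a j > p a k) →
      p (a + 1 + d) j < p (a + 1 + d) i := by
    intro a d
    induction d with
    | zero =>
      intro j ha hb hja
      have hi1 : p (a + 1) i = p a i + 1 := hinc a i (hnotmax a ha (by omega))
      have hj1 : p (a + 1) j = p 0 j := hreset a j hja
      have h2 := (h0 j).2
      have h3 := hnn a i
      simp only [Nat.add_zero]
      rw [hi1, hj1]
      linarith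
    | succ d ih =>
      intro j ha hb hja
      have hlt := ih j ha (by omega) hja
      have hni : ¬ ∀ k : Fin N, k ≠ i → p (a + 1 + d) i > p (a + 1 + d) k :=
        hnotmax _ (by omega) (by omega)
      have hnj : ¬ ∀ k : Fin N, k ≠ j → p (a + 1 + d) j > p (a + 1 + d) k := by
        intro hj
        by_cases hji : j = i
        · rw [hji] at hj; exact hni hj
        · exact lt_asymm hlt (hj i (Ne.symm hji))
      have he : a + 1 + (d + 1) = (a + 1 + d) + 1 := by ring
      rw [he, hinc _ i hni, hinc _ j hnj]
      linarith
  -- the max agent of round t₀ + k, as a function of k : Fin N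
  choose m hm using hex
  have hfne : ∀ k : Fin N, m (t₀ + (k : ℕ)) ≠ i := by
    intro k h
    have hk := k.isLt
    exact hnotmax (t₀ + k) (by omega) (by omega) (h ▸ hm (t₀ + (k : ℕ)))
  have hkey : ∀ a b : Fin N, (a : ℕ) < (b : ℕ) → m (t₀ + (a : ℕ)) ≠ m (t₀ + (b : ℕ)) := by
    intro a b hab heq
    have hb := b.isLt
    have hmaxa := hm (t₀ + (a : ℕ))
    have hmaxb := hm (t₀ + (b : ℕ))
    rw [← heq] at hmaxb
    have H := hinv (t₀ + (a : ℕ)) ((b : ℕ) - (a : ℕ) - 1) (m (t₀ + (a : ℕ)))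
      (by omega) (by omega) hmaxa
    have he : t₀ + (a : ℕ) + 1 + ((b : ℕ) - (a : ℕ) - 1) = t₀ + (b : ℕ) := by omega
    rw [he] at H
    have hji : i ≠ m (t₀ + (a : ℕ)) := fun h => hfne a h.symm
    exact lt_asymm H (hmaxb i hji)
  have hfinj : Function.Injective (fun k : Fin N => m (t₀ + (k : ℕ))) := by
    intro a b hab
    simp only at hab
    rcases Nat.lt_trichotomy (a : ℕ) (b : ℕ) with h | h | h
    · exact absurd hab (hkey a b h)
    · exact Fin.ext h
    · exact absurd hab.symm (hkey b a h)
  obtain ⟨k, hk⟩ := (Finite.injective_iff_surjective.mp hfinj) i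
  exact hfne k hk
end

section
/- Under the duration-conflict occupation model, if two agents' paths are conflict-free and both agents use unit durations with actions synchronized at integer time steps, then the paths have no vertex conflict (the agents are never at the same vertex at the same integer time) and no edge (swap) conflict (they never traverse the same edge in opposite directions during the same time step) in the sense of conventional MAPF. -/
/-- Duration-conflict occupation for a unit-duration synchronized path
`w : ℕ → V` (the agent is at `w t` at integer time `t` and takes one action
per unit interval): the agent occupies `w t` at time `t`, and both `w t` and
`w (t+1)` at every time in the open interval `(t, t+1)`. -/
def SyncOccupies {V : Type*} (w : ℕ → V) (x : V) (s : ℝ) : Prop :=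
  (∃ t : ℕ, s = (t : ℝ) ∧ x = w t) ∨
  (∃ t : ℕ, (t : ℝ) < s ∧ s < (t : ℝ) + 1 ∧ (x = w t ∨ x = w (t + 1)))

/-- If two unit-duration, integer-synchronized paths are
conflict-free under the duration-conflict occupation model, then they have
no vertex conflict (never at the same vertex at the same integer time) and
no edge (swap) conflict (never traversing the same edge in opposite
directions during the same time step), in the sense of conventional MAPF. -/
theorem duration_conflict_free_implies_no_vertex_or_edge_conflict
    {V : Type*} (w₁ w₂ : ℕ → V)
    (hcf : ∀ (x : V) (s : ℝ), ¬ (SyncOccupies w₁ x s ∧ SyncOccupies w₂ x s)) :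
    (∀ t : ℕ, w₁ t ≠ w₂ t) ∧
    (∀ t : ℕ, ¬ (w₁ (t + 1) = w₂ t ∧ w₂ (t + 1) = w₁ t)) := by
  constructor
  · intro t h
    exact hcf (w₁ t) t ⟨Or.inl ⟨t, rfl, rfl⟩, Or.inl ⟨t, rfl, h⟩⟩
  · rintro t ⟨h1, h2⟩
    refine hcf (w₁ t) ((t : ℝ) + 1/2) ⟨Or.inr ⟨t, ?_, ?_, Or.inl rfl⟩,
      Or.inr ⟨t, ?_, ?_, Or.inr h2.symm⟩⟩ <;> linarith
end
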